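/- arXiv:1904.05500 — 5 statements merged into one kernel-verified Lean document; each statement's English description precedes it below -/
import Mathlib

section
/- If C is a uniquely-Wilf permutation class containing both 12 and 21, then for each k, C contains the increasing permutation 12⋯k if and only if it contains the decreasing permutation k(k−1)⋯1. -/
abbrev PermS : Type := Σ n : ℕ, Equiv.Perm (Fin n)

def Contains (π σ : PermS) : Prop :=
  ∃ f : Fin π.1 ↪o Fin σ.1, ∀ i j : Fin π.1, π.2 i < π.2 j ↔ σ.2 (f i) < σ.2 (f j)

def IsPermClass (C : Set PermS) : Prop :=
  ∀ π σ : PermS, σ ∈ C → Contains π σ → π ∈ C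

noncomputable def avCount (C : Set PermS) (π : PermS) (n : ℕ) : ℕ :=
  {σ : PermS | σ ∈ C ∧ σ.1 = n ∧ ¬ Contains π σ}.ncard

noncomputable def invCount (C : Set PermS) (π : PermS) (n : ℕ) : ℕ :=
  {σ : PermS | σ ∈ C ∧ σ.1 = n ∧ Contains π σ}.ncard

def WilfEquivRel (C : Set PermS) (π σ : PermS) : Prop :=
  ∀ n : ℕ, avCount C π n = avCount C σ n

def UniquelyWilf (C : Set PermS) : Prop :=
  ∀ π σ : PermS, π ∈ C → σ ∈ C → π.1 = σ.1 → WilfEquivRel C π σ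

def KNBalanced (C : Set PermS) (k n : ℕ) : Prop :=
  ∀ π σ : PermS, π ∈ C → σ ∈ C → π.1 = k → σ.1 = k → invCount C π n = invCount C σ n

def Av (X : Set PermS) : Set PermS := {σ | ∀ π ∈ X, ¬ Contains π σ}

def idPerm (k : ℕ) : PermS := ⟨k, 1⟩
def revPermS (k : ℕ) : PermS := ⟨k, Fin.revPerm⟩

def p132 : PermS := ⟨3, Equiv.mk ![0,2,1] ![0,2,1] (by decide) (by decide)⟩
def p213 : PermS := ⟨3, Equiv.mk ![1,0,2] ![1,0,2] (by decide) (by decide)⟩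
def p231 : PermS := ⟨3, Equiv.mk ![1,2,0] ![2,0,1] (by decide) (by decide)⟩
def p312 : PermS := ⟨3, Equiv.mk ![2,0,1] ![1,2,0] (by decide) (by decide)⟩

/-!
Since `C` is uniquely-Wilf and contains both `12` and `21`, these two patterns are Wilf-equivalent
in `C`. A permutation avoids `21` exactly when it is increasing, i.e. is `12⋯k`, and avoids `12`
exactly when it is decreasing, i.e. is `k⋯1`. So in size `k` the class has one `21`-avoider if
`12⋯k ∈ C` and none otherwise, and likewise one `12`-avoider iff `k⋯1 ∈ C`; equal counts give the
equivalence.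
-/

theorem Equiv.Perm.eq_one_of_strictMono {α : Type*} [LinearOrder α] [WellFoundedLT α]
    {σ : Equiv.Perm α} (hσ : StrictMono σ) : σ = 1 := by
  ext a
  exact congrArg (· a)
    (Subsingleton.elim (hσ.orderIsoOfSurjective σ σ.surjective) (OrderIso.refl α))

theorem Equiv.Perm.strictMono_iff_eq_one {α : Type*} [LinearOrder α] [WellFoundedLT α]
    (σ : Equiv.Perm α) : StrictMono σ ↔ σ = 1 :=
  ⟨Equiv.Perm.eq_one_of_strictMono, fun h => h ▸ strictMono_id⟩

theorem Fin.strictAnti_perm_iff_eq_revPerm {k : ℕ} (σ : Equiv.Perm (Fin k)) :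
    StrictAnti σ ↔ σ = Fin.revPerm := by
  refine ⟨fun hσ => ?_, fun h => h ▸ Fin.rev_strictAnti⟩
  have : Fin.revPerm * σ = 1 := Equiv.Perm.eq_one_of_strictMono (Fin.rev_strictAnti.comp hσ)
  rw [eq_inv_of_mul_eq_one_right this, Equiv.Perm.inv_def, Fin.revPerm_symm]

theorem contains_size_two_iff {k : ℕ} (π : Equiv.Perm (Fin 2)) (σ : Equiv.Perm (Fin k)) :
    Contains ⟨2, π⟩ ⟨k, σ⟩ ↔ ∃ a b : Fin k, a < b ∧ (π 0 < π 1 ↔ σ a < σ b) := by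
  constructor
  · rintro ⟨f, hf⟩
    exact ⟨f 0, f 1, f.strictMono Fin.zero_lt_one, hf 0 1⟩
  · rintro ⟨a, b, hab, hπσ⟩
    refine ⟨OrderEmbedding.ofStrictMono ![a, b] (strictMono_vecEmpty.vecCons hab), fun i j => ?_⟩
    have hπ : π 0 ≠ π 1 := π.injective.ne (by decide)
    have hσ : σ a ≠ σ b := σ.injective.ne hab.ne
    fin_cases i <;> fin_cases j
    · simp
    · simpa using hπσ
    · suffices π 1 < π 0 ↔ σ b < σ a by simpa
      rw [← not_iff_not, not_lt, not_lt, hπ.le_iff_lt, hσ.le_iff_lt, hπσ]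
    · simp

theorem not_contains_idPerm_two_iff {k : ℕ} (σ : Equiv.Perm (Fin k)) :
    ¬ Contains (idPerm 2) ⟨k, σ⟩ ↔ σ = Fin.revPerm := by
  rw [← Fin.strictAnti_perm_iff_eq_revPerm]
  simp only [idPerm, contains_size_two_iff, Equiv.Perm.coe_one, id, Fin.zero_lt_one, true_iff]
  push Not
  exact ⟨fun h => (antitone_iff_forall_lt.2 h).strictAnti_of_injective σ.injective,
    fun h a b hab => (h hab).le⟩

theorem not_contains_revPermS_two_iff {k : ℕ} (σ : Equiv.Perm (Fin k)) :
    ¬ Contains (revPermS 2) ⟨k, σ⟩ ↔ σ = 1 := by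
  rw [← Equiv.Perm.strictMono_iff_eq_one]
  simp [revPermS, contains_size_two_iff, StrictMono]

theorem avCount_eq_one_iff_of_avoiders_eq {C : Set PermS} {π : PermS} {k : ℕ}
    {τ : Equiv.Perm (Fin k)} (h : ∀ σ : Equiv.Perm (Fin k), ¬ Contains π ⟨k, σ⟩ ↔ σ = τ) :
    avCount C π k = 1 ↔ (⟨k, τ⟩ : PermS) ∈ C := by
  have hset : {σ : PermS | σ ∈ C ∧ σ.1 = k ∧ ¬ Contains π σ} = {⟨k, τ⟩} ∩ C := by
    ext ⟨n, σ⟩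
    constructor
    · rintro ⟨hσC, rfl, hσ⟩
      rw [(h σ).1 hσ] at hσC ⊢
      exact ⟨rfl, hσC⟩
    · rintro ⟨hσ, hσC⟩
      cases hσ
      exact ⟨hσC, rfl, (h τ).2 rfl⟩
  rw [avCount, hset]
  by_cases hτ : (⟨k, τ⟩ : PermS) ∈ C <;> simp [hτ]

theorem stmt3_general (C : Set PermS) (hW : UniquelyWilf C)
    (h12 : idPerm 2 ∈ C) (h21 : revPermS 2 ∈ C) :
    ∀ k : ℕ, (idPerm k ∈ C ↔ revPermS k ∈ C) := by
  intro k
  calc idPerm k ∈ C ↔ avCount C (revPermS 2) k = 1 :=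
        (avCount_eq_one_iff_of_avoiders_eq not_contains_revPermS_two_iff).symm
    _ ↔ avCount C (idPerm 2) k = 1 := by rw [hW (idPerm 2) (revPermS 2) h12 h21 rfl k]
    _ ↔ revPermS k ∈ C := avCount_eq_one_iff_of_avoiders_eq not_contains_idPerm_two_iff

theorem stmt3 (C : Set PermS) (hC : IsPermClass C) (hW : UniquelyWilf C)
    (h12 : idPerm 2 ∈ C) (h21 : revPermS 2 ∈ C) :
    ∀ k : ℕ, (idPerm k ∈ C ↔ revPermS k ∈ C) :=
  stmt3_general C hW h12 h21
end

section
/- Every non-monotone permutation of size at least 4 contains a non-monotone permutation of size 3 as a pattern. -/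
def IsMonotonePerm (p : PermS) : Prop := StrictMono p.2 ∨ StrictAnti p.2

open Function

section Triples

variable {ι α : Type*} [LinearOrder ι] [LinearOrder α] [OrderBot ι] [OrderTop ι] {g : ι → α}

theorem strictMono_of_triples (hg : Injective g)
    (htriple : ∀ i j k, i < j → j < k → (g i < g j ∧ g j < g k) ∨ (g j < g i ∧ g k < g j))
    (hbt : g ⊥ ≤ g ⊤) : StrictMono g := by
  intro i j hij
  have hlt : g ⊥ < g ⊤ :=
    hbt.lt_of_ne (hg.ne (bot_le.trans_lt (hij.trans_le le_top)).ne)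
  have hbot : ∀ x, ⊥ < x → g ⊥ < g x := by
    intro x hx
    rcases (le_top : x ≤ ⊤).eq_or_lt with rfl | hxt
    · exact hlt
    · rcases htriple ⊥ x ⊤ hx hxt with h | h
      · exact h.1
      · exact absurd (h.2.trans h.1) hlt.not_gt
  rcases (bot_le : ⊥ ≤ i).eq_or_lt with rfl | hi
  · exact hbot j hij
  · rcases htriple ⊥ i j hi hij with h | h
    · exact h.2
    · exact absurd h.1 (hbot i hi).not_gt

theorem strictMono_or_strictAnti_of_triples (hg : Injective g)
    (htriple : ∀ i j k, i < j → j < k → (g i < g j ∧ g j < g k) ∨ (g j < g i ∧ g k < g j)) :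
    StrictMono g ∨ StrictAnti g := by
  rcases le_total (g ⊥) (g ⊤) with h | h
  · exact .inl (strictMono_of_triples hg htriple h)
  · refine .inr (strictMono_toDual_comp_iff.1 (strictMono_of_triples
      (OrderDual.toDual.injective.comp hg) (fun i j k hij hjk => ?_) h))
    simpa only [comp_apply, OrderDual.toDual_lt_toDual, or_comm] using htriple i j k hij hjk

end Triples

theorem Fin.exists_orderEmbedding_not_strictMono_or_strictAnti {α : Type*} [LinearOrder α]
    {n : ℕ} {g : Fin n → α} (hg : Injective g) (h : ¬ (StrictMono g ∨ StrictAnti g)) :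
    ∃ f : Fin 3 ↪o Fin n, ¬ (StrictMono (g ∘ f) ∨ StrictAnti (g ∘ f)) := by
  cases n with
  | zero => exact absurd (.inl (Subsingleton.strictMono g)) h
  | succ m =>
    by_contra! hmono
    refine h (strictMono_or_strictAnti_of_triples hg fun i j k hij hjk => ?_)
    let f : Fin 3 ↪o Fin (m + 1) := OrderEmbedding.ofStrictMono ![i, j, k]
      (((Fin.strictMono_iff_lt_succ.2 fun i => i.elim0).vecCons hjk).vecCons hij)
    rcases hmono f with hf | hf
    · exact .inl ⟨hf (show (0 : Fin 3) < 1 by decide), hf (show (1 : Fin 3) < 2 by decide)⟩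
    · exact .inr ⟨hf (show (0 : Fin 3) < 1 by decide), hf (show (1 : Fin 3) < 2 by decide)⟩

theorem exists_perm_lt_iff_lt {α : Type*} [LinearOrder α] {n : ℕ} {g : Fin n → α}
    (hg : Injective g) : ∃ τ : Equiv.Perm (Fin n), ∀ a b, τ a < τ b ↔ g a < g b := by
  have hsorted : StrictMono (g ∘ Tuple.sort g) :=
    (Tuple.monotone_sort g).strictMono_of_injective (hg.comp (Tuple.sort g).injective)
  refine ⟨(Tuple.sort g)⁻¹, fun a b => ?_⟩
  simpa using (hsorted.lt_iff_lt (a := (Tuple.sort g)⁻¹ a) (b := (Tuple.sort g)⁻¹ b)).symm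

theorem strictMono_or_strictAnti_congr {ι α β : Type*} [Preorder ι] [Preorder α] [Preorder β]
    {u : ι → α} {v : ι → β} (huv : ∀ a b, u a < u b ↔ v a < v b) :
    StrictMono u ∨ StrictAnti u ↔ StrictMono v ∨ StrictAnti v := by
  simp only [StrictMono, StrictAnti, huv]

theorem stmt10_general (n : ℕ) (σ : Equiv.Perm (Fin n))
    (h : ¬ IsMonotonePerm ⟨n, σ⟩) :
    ∃ τ : Equiv.Perm (Fin 3), ¬ IsMonotonePerm ⟨3, τ⟩ ∧ Contains ⟨3, τ⟩ ⟨n, σ⟩ := by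
  obtain ⟨f, hf⟩ := Fin.exists_orderEmbedding_not_strictMono_or_strictAnti σ.injective h
  obtain ⟨τ, hτ⟩ := exists_perm_lt_iff_lt (σ.injective.comp f.injective)
  exact ⟨τ, fun hτmono => hf ((strictMono_or_strictAnti_congr hτ).1 hτmono), f, hτ⟩

theorem stmt10 (n : ℕ) (hn : 4 ≤ n) (σ : Equiv.Perm (Fin n))
    (h : ¬ IsMonotonePerm ⟨n, σ⟩) :
    ∃ τ : Equiv.Perm (Fin 3), ¬ IsMonotonePerm ⟨3, τ⟩ ∧ Contains ⟨3, τ⟩ ⟨n, σ⟩ :=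
  stmt10_general n σ h
end

section
/- The class Av(213, 312) of permutations of size n is in bijection with binary words of length n−1 over the alphabet {L, R}, and under this bijection pattern containment in the class coincides with the (scattered) subsequence order on words. -/
/-- The class Av(213, 312). -/
def Av2 : Set PermS := Av {p213, p312}

/-! A permutation avoids 213 and 312 exactly when it has no valley, i.e. no entry with a larger
entry on each side. In such a permutation two values `a < b` appear in increasing position order
iff `a` lies left of the maximum, so the permutation is determined by its word, and every word
arises: list the values with letter L increasingly, then those with letter R decreasingly.
Since pattern containment is invariant under inversion, an occurrence of one such permutation in
another is an order embedding of values that preserves the letters of all non-maximal values,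
which is precisely an embedding of words. -/

open Equiv Function Finset

lemma contains_of_lt_imp_lt {k m : ℕ} {π : Perm (Fin k)} {σ : Perm (Fin m)} (f : Fin k ↪o Fin m)
    (hf : ∀ a b, π a < π b → σ (f a) < σ (f b)) : Contains ⟨k, π⟩ ⟨m, σ⟩ := by
  refine ⟨f, fun a b => ⟨hf a b, fun h => ?_⟩⟩
  rcases lt_trichotomy (π a) (π b) with hab | hab | hab
  · exact hab
  · exact absurd h (by rw [π.injective hab]; exact lt_irrefl _)
  · exact absurd (hf b a hab) h.asymm

lemma contains_p213 {N : ℕ} {σ : Perm (Fin N)} {i j k : Fin N} (hij : i < j) (hjk : j < k)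
    (hji : σ j < σ i) (hik : σ i < σ k) : Contains p213 ⟨N, σ⟩ := by
  refine contains_of_lt_imp_lt (.ofStrictMono ![i, j, k] (by simp [hij, hjk])) fun a b h => ?_
  fin_cases a <;> fin_cases b <;> first
    | exact absurd h (by decide) | simpa using hji | simpa using hik | simpa using hji.trans hik

lemma contains_p312 {N : ℕ} {σ : Perm (Fin N)} {i j k : Fin N} (hij : i < j) (hjk : j < k)
    (hjk' : σ j < σ k) (hki : σ k < σ i) : Contains p312 ⟨N, σ⟩ := by
  refine contains_of_lt_imp_lt (.ofStrictMono ![i, j, k] (by simp [hij, hjk])) fun a b h => ?_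
  fin_cases a <;> fin_cases b <;> first
    | exact absurd h (by decide) | simpa using hjk' | simpa using hki | simpa using hjk'.trans hki

def NoValley {N : ℕ} (σ : Perm (Fin N)) : Prop :=
  ∀ ⦃i j k : Fin N⦄, i < j → j < k → ¬ (σ j < σ i ∧ σ j < σ k)

lemma Contains.not_noValley {N : ℕ} {τ : Perm (Fin 3)} {σ : Perm (Fin N)}
    (h : Contains ⟨3, τ⟩ ⟨N, σ⟩) (h10 : τ 1 < τ 0) (h12 : τ 1 < τ 2) : ¬ NoValley σ := by
  obtain ⟨f, hf⟩ := h
  exact fun hσ => hσ (f.lt_iff_lt.2 (Fin.mk_lt_mk.2 zero_lt_one))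
    (f.lt_iff_lt.2 (Fin.mk_lt_mk.2 one_lt_two)) ⟨(hf _ _).1 h10, (hf _ _).1 h12⟩

lemma mem_Av2_iff {N : ℕ} (σ : Perm (Fin N)) : (⟨N, σ⟩ : PermS) ∈ Av2 ↔ NoValley σ := by
  constructor
  · intro hσ i j k hij hjk ⟨hji, hjk'⟩
    rcases lt_or_gt_of_ne (σ.injective.ne (hij.trans hjk).ne) with hik | hki
    · exact hσ p213 (by simp) (contains_p213 hij hjk hji hik)
    · exact hσ p312 (by simp) (contains_p312 hij hjk hjk' hki)
  · rintro hσ π hπ h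
    simp only [Set.mem_insert_iff, Set.mem_singleton_iff] at hπ
    rcases hπ with rfl | rfl <;> exact h.not_noValley (by decide) (by decide) hσ

lemma Equiv.Perm.eq_of_lt_iff_lt {N : ℕ} {σ τ : Perm (Fin N)}
    (h : ∀ a b, σ a < σ b ↔ τ a < τ b) : σ = τ := by
  have hmono : StrictMono (σ ∘ τ.symm) := fun a b hab => by simpa [h] using hab
  have hid : σ ∘ τ.symm = id := (hmono.range_inj strictMono_id).1 <| by
    rw [Set.range_id, Set.range_eq_univ]; exact σ.surjective.comp τ.symm.surjective
  exact Equiv.ext fun a => by simpa using congrFun hid (τ a)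

lemma Contains.symm {k m : ℕ} {π : Perm (Fin k)} {σ : Perm (Fin m)}
    (h : Contains ⟨k, π⟩ ⟨m, σ⟩) : Contains ⟨k, π.symm⟩ ⟨m, σ.symm⟩ := by
  obtain ⟨f, hf⟩ := h
  refine ⟨.ofStrictMono (fun a => σ (f (π.symm a))) fun a b hab => ?_, fun a b => ?_⟩
  · simpa [← hf] using hab
  · change _ ↔ σ.symm (σ _) < σ.symm (σ _)
    rw [symm_apply_apply, symm_apply_apply, f.lt_iff_lt]

lemma contains_symm_iff {k m : ℕ} {π : Perm (Fin k)} {σ : Perm (Fin m)} :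
    Contains ⟨k, π.symm⟩ ⟨m, σ.symm⟩ ↔ Contains ⟨k, π⟩ ⟨m, σ⟩ :=
  ⟨fun h => by simpa using h.symm, Contains.symm⟩

-- `s a` is the side (L = `false`, R = `true`) on which `a` lies relative to every larger value.
def IsWedge {N : ℕ} (s : Fin N → Bool) (σ : Perm (Fin N)) : Prop :=
  ∀ ⦃a b⦄, a < b → (σ.symm a < σ.symm b ↔ s a = false)

namespace IsWedge

variable {N M : ℕ} {s : Fin N → Bool} {σ : Perm (Fin N)}

lemma symm_lt_symm_iff_of_gt (h : IsWedge s σ) {a b : Fin N} (hba : b < a) :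
    σ.symm a < σ.symm b ↔ s b = true := by
  rw [← (σ.symm.injective.ne hba.ne').le_iff_lt, ← not_lt, h hba, Bool.not_eq_false]

lemma noValley (h : IsWedge s σ) : NoValley σ := by
  intro i j k hij hjk ⟨hji, hjk'⟩
  have hleft := h hji
  have hright := h hjk'
  simp only [symm_apply_apply] at hleft hright
  exact hij.asymm (hleft.2 (hright.1 hjk))

lemma symm_lt_symm_iff (h : IsWedge s σ) (a b : Fin N) :
    σ.symm a < σ.symm b ↔ a < b ∧ s a = false ∨ b < a ∧ s b = true := by
  rcases lt_trichotomy a b with hab | rfl | hab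
  · simp [h hab, hab, hab.not_gt]
  · simp
  · simp [h.symm_lt_symm_iff_of_gt hab, hab, hab.not_gt]

lemma unique {τ : Perm (Fin N)} (hσ : IsWedge s σ) (hτ : IsWedge s τ) : σ = τ :=
  symm_bijective.injective <| Perm.eq_of_lt_iff_lt fun a b => by
    rw [hσ.symm_lt_symm_iff, hτ.symm_lt_symm_iff]

lemma contains_iff {t : Fin M → Bool} {τ : Perm (Fin M)} (hσ : IsWedge s σ) (hτ : IsWedge t τ) :
    Contains ⟨N, σ⟩ ⟨M, τ⟩ ↔ ∃ g : Fin N ↪o Fin M, ∀ a b, a < b → s a = t (g a) := by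
  rw [← contains_symm_iff]
  refine exists_congr fun g => ⟨fun h a b hab => ?_, fun h a b => ?_⟩
  · have := h a b
    rw [hσ hab, hτ (g.lt_iff_lt.2 hab)] at this
    cases hs : s a <;> cases ht : t (g a) <;> simp_all
  · rw [hσ.symm_lt_symm_iff, hτ.symm_lt_symm_iff, g.lt_iff_lt, g.lt_iff_lt]
    rcases lt_trichotomy a b with hab | rfl | hab
    · simp [hab, hab.not_gt, h a b hab]
    · simp
    · simp [hab, hab.not_gt, h b a hab]

end IsWedge

section
variable {n m : ℕ}

lemma NoValley.symm_lt_symm_iff_of_lt {σ : Perm (Fin (n + 1))} (hσ : NoValley σ) {a b : Fin (n + 1)}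
    (hab : a < b) : σ.symm a < σ.symm b ↔ σ.symm a < σ.symm (Fin.last n) := by
  rcases (Fin.le_last b).eq_or_lt with rfl | hb
  · rfl
  have hne : ∀ {c d}, c < d → σ.symm c ≠ σ.symm d := fun hcd => σ.symm.injective.ne hcd.ne
  constructor
  · intro h
    by_contra hc
    exact hσ ((not_lt.1 hc).lt_of_ne (hne (hab.trans hb)).symm) h
      ⟨by simpa using hab.trans hb, by simpa using hab⟩
  · intro h
    by_contra hc
    exact hσ ((not_lt.1 hc).lt_of_ne (hne hab).symm) h
      ⟨by simpa using hab, by simpa using hab.trans hb⟩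

def rightOfMax (σ : Perm (Fin (n + 1))) (v : Fin (n + 1)) : Bool :=
  decide (σ.symm (Fin.last n) < σ.symm v)

def word (σ : Perm (Fin (n + 1))) : List Bool :=
  List.ofFn fun i : Fin n => rightOfMax σ i.castSucc

lemma NoValley.isWedge {σ : Perm (Fin (n + 1))} (hσ : NoValley σ) : IsWedge (rightOfMax σ) σ := by
  intro a b hab
  have hne : σ.symm a ≠ σ.symm (Fin.last n) :=
    σ.symm.injective.ne (hab.trans_le (Fin.le_last b)).ne
  rw [hσ.symm_lt_symm_iff_of_lt hab, rightOfMax, decide_eq_false_iff_not, not_lt, hne.le_iff_lt]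

lemma IsWedge.rightOfMax_castSucc {s : Fin (n + 1) → Bool} {σ : Perm (Fin (n + 1))}
    (h : IsWedge s σ) (i : Fin n) : rightOfMax σ i.castSucc = s i.castSucc := by
  simp [rightOfMax, h.symm_lt_symm_iff_of_gt (Fin.castSucc_lt_last i)]

lemma NoValley.eq_of_word_eq {σ τ : Perm (Fin (n + 1))} (hσ : NoValley σ) (hτ : NoValley τ)
    (h : word σ = word τ) : σ = τ := by
  have hside : rightOfMax σ = rightOfMax τ := by
    funext v
    induction v using Fin.lastCases with
    | last => simp [rightOfMax]
    | cast i => exact congrFun (List.ofFn_injective h) i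
  exact hσ.isWedge.unique (hside ▸ hτ.isWedge)

lemma Fin.forall_lt_imp_iff {P : Fin (n + 1) → Prop} :
    (∀ a b : Fin (n + 1), a < b → P a) ↔ ∀ i : Fin n, P i.castSucc := by
  refine ⟨fun h i => h _ _ (Fin.castSucc_lt_last i), fun h a b hab => ?_⟩
  induction a using Fin.lastCases with
  | last => exact absurd hab (Fin.le_last b).not_gt
  | cast i => exact h i

lemma Fin.exists_orderEmbedding_succ_iff {P : Fin n → Fin (m + 1) → Prop} :
    (∃ g : Fin (n + 1) ↪o Fin (m + 1), ∀ i, P i (g i.castSucc)) ↔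
      ∃ e : Fin n ↪o Fin m, ∀ i, P i (e i).castSucc := by
  constructor
  · rintro ⟨g, hg⟩
    have hne : ∀ i : Fin n, g i.castSucc ≠ Fin.last m := fun i =>
      (g.lt_iff_lt.2 (Fin.castSucc_lt_last i)).trans_le (Fin.le_last _) |>.ne
    refine ⟨.ofStrictMono _ (Fin.strictMono_castPred_comp hne
      (g.strictMono.comp Fin.strictMono_castSucc)), fun i => ?_⟩
    simpa using hg i
  · rintro ⟨e, he⟩
    have hmono : StrictMono (Fin.lastCases (Fin.last m) fun i => (e i).castSucc) := by
      intro a b hab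
      induction b using Fin.lastCases with
      | last =>
        induction a using Fin.lastCases with
        | last => exact absurd hab (lt_irrefl _)
        | cast i => simp
      | cast j =>
        induction a using Fin.lastCases with
        | last => exact absurd hab (Fin.le_last _).not_gt
        | cast i => simpa using e.lt_iff_lt.2 (by simpa using hab)
    exact ⟨.ofStrictMono _ hmono, fun i => by simpa using he i⟩

lemma List.ofFn_sublist_ofFn_iff {α : Type*} {f : Fin n → α} {g : Fin m → α} :
    (List.ofFn f).Sublist (List.ofFn g) ↔ ∃ e : Fin n ↪o Fin m, ∀ i, f i = g (e i) := by
  rw [List.sublist_iff_exists_fin_orderEmbedding_get_eq]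
  have hf : (List.ofFn f).length = n := List.length_ofFn
  have hg : (List.ofFn g).length = m := List.length_ofFn
  constructor
  · rintro ⟨e, he⟩
    refine ⟨(Fin.castOrderIso hf.symm).toOrderEmbedding.trans
      (e.trans (Fin.castOrderIso hg).toOrderEmbedding), fun i => ?_⟩
    simpa [Fin.cast] using he (Fin.cast hf.symm i)
  · rintro ⟨e, he⟩
    refine ⟨(Fin.castOrderIso hf).toOrderEmbedding.trans
      (e.trans (Fin.castOrderIso hg.symm).toOrderEmbedding), fun i => ?_⟩
    simpa [Fin.cast] using he (Fin.cast hf i)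

lemma NoValley.contains_iff_word_sublist {σ : Perm (Fin (n + 1))} {τ : Perm (Fin (m + 1))}
    (hσ : NoValley σ) (hτ : NoValley τ) :
    Contains ⟨n + 1, σ⟩ ⟨m + 1, τ⟩ ↔ (word σ).Sublist (word τ) := by
  rw [hσ.isWedge.contains_iff hτ.isWedge, word, word, List.ofFn_sublist_ofFn_iff]
  simp_rw [Fin.forall_lt_imp_iff]
  exact Fin.exists_orderEmbedding_succ_iff
    (P := fun i v => rightOfMax σ i.castSucc = rightOfMax τ v)

end

section Construction
variable {N : ℕ} (s : Fin N → Bool)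

def sideCount (b : Bool) (v : Fin N) : ℕ := #{u ∈ Iio v | s u = b}

lemma sideCount_false_add_sideCount_true (v : Fin N) :
    sideCount s false v + sideCount s true v = v := by
  rw [← Fin.card_Iio v, ← card_filter_add_card_filter_not (fun u => s u = false)]
  simp [sideCount]

lemma sideCount_lt_sideCount {a b : Fin N} (hab : a < b) :
    sideCount s (s a) a < sideCount s (s a) b := by
  refine card_lt_card ⟨filter_subset_filter _ (Iio_subset_Iio hab.le), fun h => ?_⟩
  simpa using h (mem_filter.2 ⟨mem_Iio.2 hab, rfl⟩)

-- The position of `v` in the sequence listing the values with letter L increasingly, followed by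
-- those with letter R decreasingly.
def wedgePos (v : Fin N) : Fin N :=
  if s v then ⟨N - 1 - sideCount s true v, by have := v.2; omega⟩
  else ⟨sideCount s false v, by have := sideCount_false_add_sideCount_true s v; omega⟩

variable {s}

lemma wedgePos_lt_wedgePos_of_lt {a b : Fin N} (hab : a < b) :
    if s a then wedgePos s b < wedgePos s a else wedgePos s a < wedgePos s b := by
  have hcount := sideCount_lt_sideCount s hab
  have ha := sideCount_false_add_sideCount_true s a
  have hb := sideCount_false_add_sideCount_true s b
  have hbN := b.2
  have hab' : (a : ℕ) < b := hab
  cases hsa : s a <;> cases hsb : s b <;> rw [hsa] at hcount <;>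
    simp [wedgePos, hsa, hsb, Fin.lt_def] <;> omega

variable (s) in
lemma wedgePos_injective : Injective (wedgePos s) := by
  refine .of_lt_imp_ne fun a b hab => ?_
  have h := wedgePos_lt_wedgePos_of_lt (s := s) hab
  split_ifs at h
  exacts [h.ne', h.ne]

variable (s) in
noncomputable def wedgePerm : Perm (Fin N) :=
  (Equiv.ofBijective _ (Finite.injective_iff_bijective.1 (wedgePos_injective s))).symm

variable (s) in
lemma isWedge_wedgePerm : IsWedge s (wedgePerm s) := by
  intro a b hab
  change wedgePos s a < wedgePos s b ↔ _
  have h := wedgePos_lt_wedgePos_of_lt (s := s) hab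
  split_ifs at h with hsa
  · simpa [hsa] using h.asymm
  · simpa [hsa] using h

end Construction

lemma exists_noValley_word_eq {n : ℕ} (f : Fin n → Bool) :
    ∃ σ : Perm (Fin (n + 1)), NoValley σ ∧ word σ = List.ofFn f := by
  have hσ := isWedge_wedgePerm (Fin.lastCases (motive := fun _ => Bool) false f)
  exact ⟨_, hσ.noValley, by simp [word, hσ.rightOfMax_castSucc]⟩

lemma exists_eq_mk_of_mem_Av2 {n : ℕ} (p : {p : PermS // p ∈ Av2 ∧ p.1 = n + 1}) :
    ∃ (σ : Perm (Fin (n + 1))) (hσ : (⟨n + 1, σ⟩ : PermS) ∈ Av2), p = ⟨⟨n + 1, σ⟩, hσ, rfl⟩ := by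
  obtain ⟨⟨k, σ⟩, hσ, hk⟩ := p
  cases hk
  exact ⟨σ, hσ, rfl⟩

def toWord (n : ℕ) : {p : PermS // p ∈ Av2 ∧ p.1 = n + 1} → {w : List Bool // w.length = n}
  | ⟨⟨_, σ⟩, _, rfl⟩ => ⟨word σ, List.length_ofFn⟩

lemma toWord_bijective (n : ℕ) : Bijective (toWord n) := by
  constructor
  · intro p q h
    obtain ⟨σ, hσ, rfl⟩ := exists_eq_mk_of_mem_Av2 p
    obtain ⟨τ, hτ, rfl⟩ := exists_eq_mk_of_mem_Av2 q
    obtain rfl := ((mem_Av2_iff σ).1 hσ).eq_of_word_eq ((mem_Av2_iff τ).1 hτ)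
      (congrArg Subtype.val h)
    rfl
  · rintro ⟨w, rfl⟩
    obtain ⟨σ, hσ, hw⟩ := exists_noValley_word_eq fun i : Fin w.length => w[i]
    exact ⟨⟨⟨_, σ⟩, (mem_Av2_iff σ).2 hσ, rfl⟩, Subtype.ext (hw.trans List.ofFn_getElem)⟩

/-- Words over {L, R}: `false` is `L`, `true` is `R`. -/
theorem stmt15 :
    ∃ e : ∀ n : ℕ, {p : PermS // p ∈ Av2 ∧ p.1 = n + 1} ≃ {w : List Bool // w.length = n},
      ∀ (n m : ℕ) (p : {p : PermS // p ∈ Av2 ∧ p.1 = n + 1})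
        (q : {q : PermS // q ∈ Av2 ∧ q.1 = m + 1}),
        Contains p.val q.val ↔ ((e n p).val.Sublist ((e m q).val)) := by
  refine ⟨fun n => .ofBijective _ (toWord_bijective n), ?_⟩
  intro n m p q
  obtain ⟨σ, hσ, rfl⟩ := exists_eq_mk_of_mem_Av2 p
  obtain ⟨τ, hτ, rfl⟩ := exists_eq_mk_of_mem_Av2 q
  exact ((mem_Av2_iff σ).1 hσ).contains_iff_word_sublist ((mem_Av2_iff τ).1 hτ)
end

section
/- For words over the alphabet {L, R}: for any two words α, β of the same length, there is a length-preserving bijection between the set of words that contain αL as a subsequence but no proper prefix of which contains αL, and the set of words that contain βR as a subsequence but no proper prefix of which contains βR. -/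
/-- `w` contains `u` as a (scattered) subsequence but no proper prefix of `w` does. -/
def MinContains (u w : List Bool) : Prop :=
  u.Sublist w ∧ ∀ p : List Bool, p <+: w → p ≠ w → ¬ u.Sublist p

/-! A minimal container of `x₁ x₂ ⋯ xₘ` is exactly a word `ȳ^{k₁} x₁ ȳ^{k₂} x₂ ⋯ ȳ^{kₘ} xₘ`, where
`ȳ^{kᵢ}` is a run of the letter other than `xᵢ`: reading greedily, each letter of the pattern is
matched at its first occurrence, and minimality forbids anything after the last match. So the
minimal containers of any pattern of length `m` are in length-preserving bijection with `ℕ^m`,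
a container of length `m + ∑ kᵢ` corresponding to `(k₁, …, kₘ)`. -/

namespace MinContains

theorem cons_iff_of_ne_nil {u : List Bool} (hu : u ≠ []) (a : Bool) (w : List Bool) :
    MinContains u (a :: w) ↔
      u.Sublist (a :: w) ∧ ∀ p : List Bool, p <+: w → p ≠ w → ¬ u.Sublist (a :: p) := by
  refine and_congr_right fun _ => ⟨fun h p hp hpw => ?_, fun h p hp hpw => ?_⟩
  · exact h (a :: p) (List.cons_prefix_cons.2 ⟨rfl, hp⟩) (by simpa using hpw)
  · rcases List.prefix_cons_iff.1 hp with rfl | ⟨t, rfl, ht⟩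
    · simpa using hu
    · exact h t ht (by simpa using hpw)

theorem not_nil_cons (x : Bool) (α : List Bool) : ¬ MinContains (x :: α) [] := by
  simp [MinContains]

theorem nil_iff (w : List Bool) : MinContains [] w ↔ w = [] := by
  refine ⟨fun h => by_contra fun hw => ?_, ?_⟩
  · exact h.2 [] List.nil_prefix (Ne.symm hw) (List.nil_sublist _)
  · rintro rfl
    exact ⟨List.nil_sublist _, fun p hp hpw => absurd (List.prefix_nil.1 hp) hpw⟩

theorem cons_cons_iff (x : Bool) (α w : List Bool) :
    MinContains (x :: α) (x :: w) ↔ MinContains α w := by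
  simp only [cons_iff_of_ne_nil (List.cons_ne_nil x α), List.cons_sublist_cons]
  rfl

theorem cons_iff_of_ne {a x : Bool} (hax : a ≠ x) (α w : List Bool) :
    MinContains (x :: α) (a :: w) ↔ MinContains (x :: α) w := by
  have skip (q : List Bool) : (x :: α).Sublist (a :: q) ↔ (x :: α).Sublist q := by
    simp [List.sublist_cons_iff, Ne.symm hax]
  simp only [cons_iff_of_ne_nil (List.cons_ne_nil x α), skip]
  rfl

theorem cons_iff (x : Bool) (α w : List Bool) :
    MinContains (x :: α) w ↔
      ∃ k w', w = List.replicate k (!x) ++ x :: w' ∧ MinContains α w' := by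
  induction w with
  | nil => simp [not_nil_cons]
  | cons a w ih =>
    rcases Bool.eq_or_eq_not a x with rfl | rfl
    · rw [cons_cons_iff]
      constructor
      · exact fun h => ⟨0, w, rfl, h⟩
      · rintro ⟨_ | k, w', hw, h⟩
        · obtain rfl : w = w' := by simpa using hw
          exact h
        · simp [List.replicate_succ] at hw
    · rw [cons_iff_of_ne (by simp), ih]
      constructor
      · rintro ⟨k, w', rfl, h⟩
        exact ⟨k + 1, w', rfl, h⟩
      · rintro ⟨_ | k, w', hw, h⟩
        · simp at hw
        · exact ⟨k, w', by simpa [List.replicate_succ] using hw, h⟩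

end MinContains

theorem List.replicate_append_cons_inj {ι : Type*} {a b : ι} (hab : a ≠ b) {k k' : ℕ}
    {u u' : List ι} :
    List.replicate k a ++ b :: u = List.replicate k' a ++ b :: u' ↔ k = k' ∧ u = u' := by
  induction k generalizing k' with
  | zero => cases k' <;> simp [List.replicate_succ, Ne.symm hab]
  | succ k ih => cases k' <;> simp [List.replicate_succ, hab, ih]

def gapWord : List Bool → List ℕ → List Bool
  | x :: α, k :: ks => List.replicate k (!x) ++ x :: gapWord α ks
  | _, _ => []

theorem length_gapWord {α : List Bool} {ks : List ℕ} (h : ks.length = α.length) :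
    (gapWord α ks).length = α.length + ks.sum := by
  induction α generalizing ks with
  | nil => simp_all [gapWord]
  | cons x α ih =>
    obtain ⟨k, ks, rfl⟩ := List.exists_cons_of_length_eq_add_one h
    simp only [gapWord, List.length_append, List.length_replicate, List.length_cons,
      ih (Nat.succ.inj h), List.sum_cons]
    omega

theorem minContains_gapWord {α : List Bool} {ks : List ℕ} (h : ks.length = α.length) :
    MinContains α (gapWord α ks) := by
  induction α generalizing ks with
  | nil => simp [MinContains.nil_iff, gapWord]
  | cons x α ih =>
    obtain ⟨k, ks, rfl⟩ := List.exists_cons_of_length_eq_add_one h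
    exact (MinContains.cons_iff x α _).2 ⟨k, _, rfl, ih (Nat.succ.inj h)⟩

theorem MinContains.exists_gapWord {α w : List Bool} (h : MinContains α w) :
    ∃ ks : List ℕ, ks.length = α.length ∧ gapWord α ks = w := by
  induction α generalizing w with
  | nil => exact ⟨[], rfl, ((MinContains.nil_iff w).1 h).symm⟩
  | cons x α ih =>
    obtain ⟨k, w', rfl, h'⟩ := (MinContains.cons_iff x α w).1 h
    obtain ⟨ks, hks, rfl⟩ := ih h'
    exact ⟨k :: ks, by simp [hks], rfl⟩

theorem gapWord_inj {α : List Bool} {ks ks' : List ℕ} (h : ks.length = α.length)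
    (h' : ks'.length = α.length) : gapWord α ks = gapWord α ks' ↔ ks = ks' := by
  refine ⟨fun heq => ?_, congrArg _⟩
  induction α generalizing ks ks' with
  | nil => simp_all
  | cons x α ih =>
    obtain ⟨k, ks, rfl⟩ := List.exists_cons_of_length_eq_add_one h
    obtain ⟨k', ks', rfl⟩ := List.exists_cons_of_length_eq_add_one h'
    rw [gapWord, gapWord, List.replicate_append_cons_inj (by simp : (!x) ≠ x)] at heq
    obtain ⟨rfl, heq⟩ := heq
    rw [ih (Nat.succ.inj h) (Nat.succ.inj h') heq]

noncomputable def gapWordEquiv (α : List Bool) :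
    {ks : List ℕ // ks.length = α.length} ≃ {w : List Bool // MinContains α w} :=
  Equiv.ofBijective (fun ks => ⟨gapWord α ks, minContains_gapWord ks.2⟩)
    ⟨fun ks ks' h => Subtype.ext ((gapWord_inj ks.2 ks'.2).1 (congrArg Subtype.val h)),
      fun w =>
        let ⟨ks, hks, hw⟩ := w.2.exists_gapWord
        ⟨⟨ks, hks⟩, Subtype.ext hw⟩⟩

@[simp]
theorem gapWordEquiv_apply_coe (α : List Bool) (ks : {ks : List ℕ // ks.length = α.length}) :
    (gapWordEquiv α ks : List Bool) = gapWord α ks :=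
  rfl

theorem exists_length_preserving_equiv_minContains {α β : List Bool}
    (h : α.length = β.length) :
    ∃ e : {w : List Bool // MinContains α w} ≃ {w : List Bool // MinContains β w},
      ∀ w, (e w).val.length = w.val.length := by
  refine ⟨(gapWordEquiv α).symm.trans
    ((Equiv.subtypeEquivRight fun ks => by rw [h]).trans (gapWordEquiv β)), fun w => ?_⟩
  obtain ⟨ks, rfl⟩ := (gapWordEquiv α).surjective w
  simp [length_gapWord, ks.2, h]

/-- Words over {L, R}: `false` is `L`, `true` is `R`. -/
theorem stmt16 (α β : List Bool) (h : α.length = β.length) :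
    ∃ e : {w : List Bool // MinContains (α ++ [false]) w} ≃
          {w : List Bool // MinContains (β ++ [true]) w},
      ∀ w, (e w).val.length = w.val.length :=
  exists_length_preserving_equiv_minContains (by simp [h])
end

section
/- For any two words α, β of the same length over {L, R} and any n, the number of words of length n containing α as a subsequence equals the number of words of length n containing β as a subsequence. -/
/-! Let `N α n` be the number of words of length `n` containing `α`. A word `c :: w` contains
`a :: α` iff either `c = a` and `w` contains `α`, or `c ≠ a` and `w` contains `a :: α`. Over an
alphabet of `k` letters this gives `N (a :: α) (n + 1) = N α n + (k - 1) * N (a :: α) n` and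
`N (a :: α) 0 = 0`, a recurrence that does not see the letters of the pattern, so `N α n` depends
on `α` only through its length. -/

variable {A : Type*}

noncomputable def containerCount (α : List A) (n : ℕ) : ℕ :=
  {w : List A | w.length = n ∧ α.Sublist w}.ncard

lemma cons_sublist_cons_iff_of_ne {a c : A} (hca : c ≠ a) {α w : List A} :
    (a :: α).Sublist (c :: w) ↔ (a :: α).Sublist w := by
  rw [List.sublist_cons_iff]
  simp [Ne.symm hca]

lemma setOf_length_succ_cons_sublist (a : A) (α : List A) (n : ℕ) :
    {w : List A | w.length = n + 1 ∧ (a :: α).Sublist w}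
      = (fun p : A × List A => p.1 :: p.2) ''
          ({a} ×ˢ {w | w.length = n ∧ α.Sublist w}
            ∪ {a}ᶜ ×ˢ {w | w.length = n ∧ (a :: α).Sublist w}) := by
  ext w
  cases w with
  | nil => simp
  | cons c w =>
    by_cases hca : c = a
    · subst hca
      simp
    · simp [hca, cons_sublist_cons_iff_of_ne hca]

lemma containerCount_cons_zero (a : A) (α : List A) : containerCount (a :: α) 0 = 0 := by
  rw [containerCount, ← Set.ncard_empty (List A)]
  congr 1
  ext w
  cases w <;> simp

variable [Finite A]

lemma containerCount_cons_succ (a : A) (α : List A) (n : ℕ) :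
    containerCount (a :: α) (n + 1)
      = containerCount α n + (Nat.card A - 1) * containerCount (a :: α) n := by
  have hcons : Function.Injective (fun p : A × List A => p.1 :: p.2) :=
    fun p q h => Prod.ext (List.cons.inj h).1 (List.cons.inj h).2
  have hfin (P : List A → Prop) : {w : List A | w.length = n ∧ P w}.Finite :=
    (List.finite_length_eq A n).subset fun _ hw => hw.1
  have hdisj : Disjoint ({a} ×ˢ {w : List A | w.length = n ∧ α.Sublist w})
      ({a}ᶜ ×ˢ {w : List A | w.length = n ∧ (a :: α).Sublist w}) :=
    Set.disjoint_prod.2 (Or.inl disjoint_compl_right)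
  rw [containerCount, setOf_length_succ_cons_sublist, Set.ncard_image_of_injective _ hcons,
    Set.ncard_union_eq hdisj ((Set.finite_singleton a).prod (hfin _))
      ((Set.toFinite _).prod (hfin _)),
    Set.ncard_prod, Set.ncard_prod, Set.ncard_singleton, one_mul, Set.ncard_compl,
    Set.ncard_singleton]
  rfl

theorem containerCount_eq_of_length_eq {α β : List A} (h : α.length = β.length) (n : ℕ) :
    containerCount α n = containerCount β n := by
  induction α generalizing β n with
  | nil => rw [List.eq_nil_of_length_eq_zero h.symm]
  | cons a α ih =>
    obtain ⟨b, β, rfl⟩ := List.exists_cons_of_length_eq_add_one h.symm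
    induction n with
    | zero => rw [containerCount_cons_zero, containerCount_cons_zero]
    | succ n ihn =>
      rw [containerCount_cons_succ, containerCount_cons_succ, ih (Nat.succ.inj h) n, ihn]

/-- Words over {L, R}: `Bool` is the two-letter alphabet. -/
theorem stmt17 (α β : List Bool) (h : α.length = β.length) (n : ℕ) :
    {w : List Bool | w.length = n ∧ α.Sublist w}.ncard
      = {w : List Bool | w.length = n ∧ β.Sublist w}.ncard :=
  containerCount_eq_of_length_eq h n
end
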